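/- arXiv:math/0304118 — 2 statements merged into one kernel-verified Lean document; each statement's English description precedes it below -/
import Mathlib

section
/- Let k be a field, R = k[s,u,t,v], and let f1, f2, f3 ∈ R generate an ideal I = ⟨f1,f2,f3⟩ of height 2. Then the Koszul module K is a proper submodule of the syzygy module S, i.e., K ⊆ S and K ≠ S. -/
/-!
STATEMENT 5: k field, R = k[s,u,t,v], f1,f2,f3 generating an ideal I of
height 2.  Then the Koszul module K is a proper submodule of the syzygy
module S: K ≤ S and K ≠ S.
-/

noncomputable section

/-- Height of an ideal: infimum of the heights of the primes containing it. -/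
def idealHeight {A : Type*} [CommRing A] (I : Ideal A) : ℕ∞ :=
  ⨅ (P : PrimeSpectrum A) (_ : I ≤ P.asIdeal), Order.height P

/-- The syzygy module of f₁, f₂, f₃. -/
def Syz {k : Type} [Field k] (f₁ f₂ f₃ : MvPolynomial (Fin 4) k) :
    Submodule (MvPolynomial (Fin 4) k) (Fin 3 → MvPolynomial (Fin 4) k) :=
  LinearMap.ker
    ((LinearMap.proj 0 : (Fin 3 → MvPolynomial (Fin 4) k) →ₗ[MvPolynomial (Fin 4) k]
        MvPolynomial (Fin 4) k).smulRight f₁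
      + (LinearMap.proj 1).smulRight f₂ + (LinearMap.proj 2).smulRight f₃)

/-- The Koszul module of f₁, f₂, f₃. -/
def Kos {k : Type} [Field k] (f₁ f₂ f₃ : MvPolynomial (Fin 4) k) :
    Submodule (MvPolynomial (Fin 4) k) (Fin 3 → MvPolynomial (Fin 4) k) :=
  Submodule.span (MvPolynomial (Fin 4) k) {![f₂, -f₁, 0], ![f₃, 0, -f₁], ![0, f₃, -f₂]}

/-!
If `K = S`, then `f₃` is a nonzerodivisor modulo `(f₁, f₂)`, so for a prime `P ⊇ I` the
multiplicative set generated by `f₃` and `R ∖ P` avoids `(f₁, f₂)`, giving a prime `Q` with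
`(f₁, f₂) ⊆ Q ⊊ P`. Write `f₁ = d a`, `f₂ = d b` with `a, b` coprime; the syzygy `(b, -a, 0)`
shows that `d` is a unit modulo `f₃`, so `d ∉ P` and `a, b ∈ Q`. In the UFD `R`, a height-one
prime is principal and cannot contain two coprime elements, so `Q` has height at least `2` and
`P` at least `3`. Hence `I` has height at least `3`.
-/

open Ideal

variable {R : Type*} [CommRing R]

/-- `Kos f₁ f₂ f₃ = Syz f₁ f₂ f₃` stated elementwise: every syzygy `(A, B, C)` equals
`a • (f₂, -f₁, 0) + b • (f₃, 0, -f₁) + c • (0, f₃, -f₂)`. -/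
def IsKoszulExact (f₁ f₂ f₃ : R) : Prop :=
  ∀ A B C : R, A * f₁ + B * f₂ + C * f₃ = 0 →
    ∃ a b c : R, A = a * f₂ + b * f₃ ∧ B = -(a * f₁) + c * f₃ ∧ C = -(b * f₁) - c * f₂

namespace IsKoszulExact

variable {f₁ f₂ f₃ : R} (h : IsKoszulExact f₁ f₂ f₃)
include h

theorem isCoprime_of_eq_zero (h₂ : f₂ = 0) : IsCoprime f₁ f₃ := by
  obtain ⟨a, -, c, -, h1, -⟩ := h 0 1 0 (by rw [h₂]; ring)
  exact ⟨-a, c, by linear_combination -h1⟩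

theorem mem_span_pair_of_mul_mem {y : R} (hy : y * f₃ ∈ span {f₁, f₂}) :
    y ∈ span {f₁, f₂} := by
  obtain ⟨u, v, huv⟩ := mem_span_pair.mp hy
  obtain ⟨-, b, c, -, -, hy⟩ := h (-u) (-v) y (by linear_combination -huv)
  exact mem_span_pair.mpr ⟨-b, -c, by rw [hy]; ring⟩

theorem isCoprime_of_eq_mul {d a b : R} [IsDomain R] [DecompositionMonoid R] (h₁ : f₁ = d * a)
    (h₂ : f₂ = d * b) (hab : IsRelPrime a b) (hd : d ≠ 0) (hb : b ≠ 0) : IsCoprime d f₃ := by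
  obtain ⟨α, β, γ, hb', -, h0⟩ := h b (-a) 0 (by rw [h₁, h₂]; ring)
  have hβγ : d * (β * a + γ * b) = 0 := by rw [h₁, h₂] at h0; linear_combination h0
  have hβ : b ∣ β := hab.symm.dvd_of_dvd_mul_right
    ⟨-γ, by linear_combination (mul_eq_zero.mp hβγ).resolve_left hd⟩
  obtain ⟨τ, rfl⟩ := hβ
  refine ⟨α, τ, mul_left_cancel₀ hb ?_⟩
  rw [h₂] at hb'
  linear_combination -hb'

end IsKoszulExact

theorem Ideal.exists_isPrime_le_lt_of_mul_mem {J P : Ideal R} [P.IsPrime] {x : R} (hJP : J ≤ P)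
    (hxP : x ∈ P) (hx : ∀ y, y * x ∈ J → y ∈ J) : ∃ Q : Ideal R, Q.IsPrime ∧ J ≤ Q ∧ Q < P := by
  have hpow : ∀ n (t : R), x ^ n * t ∈ J → t ∈ J := by
    intro n
    induction n with
    | zero => simp
    | succ n ih => exact fun t ht ↦ ih t (hx _ (by rwa [mul_right_comm, ← pow_succ]))
  have hdisj :
      Disjoint (J : Set R) ((Submonoid.powers x ⊔ P.primeCompl : Submonoid R) : Set R) := by
    rw [Set.disjoint_left]
    rintro _ hJ hT
    obtain ⟨_, ⟨n, rfl⟩, t, ht, rfl⟩ := Submonoid.mem_sup.mp hT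
    exact ht (hJP (hpow n t hJ))
  obtain ⟨Q, hQ, hJQ, hQT⟩ := exists_le_prime_disjoint J _ hdisj
  have hQP : Q ≤ P := fun y hy ↦ by_contra fun hyP ↦
    Set.disjoint_left.mp hQT hy (Submonoid.mem_sup_right hyP)
  have hxQ : x ∉ Q := fun hx ↦
    Set.disjoint_left.mp hQT hx (Submonoid.mem_sup_left (Submonoid.mem_powers x))
  exact ⟨Q, hQ, hJQ, lt_of_le_of_ne hQP fun hQP ↦ hxQ (hQP ▸ hxP)⟩

theorem Ideal.two_le_height_of_isRelPrime [IsDomain R] [UniqueFactorizationMonoid R]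
    {Q : Ideal R} [Q.IsPrime] {a b : R} (hab : IsRelPrime a b) (hb : b ≠ 0) (ha : a ∈ Q)
    (hbQ : b ∈ Q) : 2 ≤ Q.height := by
  have h0 : Q.height ≠ 0 := by
    rw [Ne, height_eq_zero_iff_eq_bot]
    exact fun hQ ↦ hb (by simpa [hQ] using hbQ)
  have h1 : Q.height ≠ 1 := by
    intro h1
    obtain ⟨g, rfl⟩ := UniqueFactorizationMonoid.isPrincipal_of_height_eq_one h1
    rw [submodule_span_eq, mem_span_singleton] at ha hbQ
    exact IsPrime.ne_top ‹_› ((span_singleton_eq_top).mpr (hab ha hbQ))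
  generalize Q.height = n at h0 h1 ⊢
  induction n using ENat.recTopCoe with
  | top => exact le_top
  | coe n => norm_cast at h0 h1 ⊢; omega

theorem IsKoszulExact.three_le_height [IsDomain R] [UniqueFactorizationMonoid R]
    {f₁ f₂ f₃ : R} (h : IsKoszulExact f₁ f₂ f₃) {P : Ideal R} [P.IsPrime]
    (hP : span {f₁, f₂, f₃} ≤ P) : 3 ≤ P.height := by
  have hf₁ : f₁ ∈ P := hP (subset_span (by simp))
  have hf₂ : f₂ ∈ P := hP (subset_span (by simp))
  have hf₃ : f₃ ∈ P := hP (subset_span (by simp))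
  have hf₂0 : f₂ ≠ 0 := fun h₂ ↦
    IsPrime.notMem_of_isCoprime_of_mem (h.isCoprime_of_eq_zero h₂) hf₁ hf₃
  obtain ⟨a, b, d, hab, hda, hdb⟩ := UniqueFactorizationMonoid.exists_reduced_factors' f₁ f₂ hf₂0
  have hd0 : d ≠ 0 := by rintro rfl; simp [← hdb] at hf₂0
  have hb0 : b ≠ 0 := by rintro rfl; simp [← hdb] at hf₂0
  have hdP : d ∉ P := fun hd ↦ IsPrime.notMem_of_isCoprime_of_mem
    (h.isCoprime_of_eq_mul hda.symm hdb.symm hab hd0 hb0) hd hf₃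
  have hJP : span {f₁, f₂} ≤ P := span_le.mpr (by simp [Set.insert_subset_iff, hf₁, hf₂])
  obtain ⟨Q, hQ, hJQ, hQP⟩ :=
    exists_isPrime_le_lt_of_mul_mem hJP hf₃ fun _ ↦ h.mem_span_pair_of_mul_mem
  have hdQ : d ∉ Q := fun hd ↦ hdP (hQP.le hd)
  have haQ : a ∈ Q :=
    (hQ.mem_or_mem (hda ▸ hJQ (subset_span (by simp)))).resolve_left hdQ
  have hbQ : b ∈ Q :=
    (hQ.mem_or_mem (hdb ▸ hJQ (subset_span (by simp)))).resolve_left hdQ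
  calc (3 : ℕ∞) = 2 + 1 := rfl
    _ ≤ Q.height + 1 := by gcongr; exact two_le_height_of_isRelPrime hab hb0 haQ hbQ
    _ ≤ P.height := height_add_one_le_of_lt_of_isPrime hQP

section Polynomial

variable {k : Type} [Field k] {f₁ f₂ f₃ : MvPolynomial (Fin 4) k}

theorem mem_syz_iff {v : Fin 3 → MvPolynomial (Fin 4) k} :
    v ∈ Syz f₁ f₂ f₃ ↔ v 0 * f₁ + v 1 * f₂ + v 2 * f₃ = 0 := by
  simp [Syz, smul_eq_mul]

theorem kos_le_syz : Kos f₁ f₂ f₃ ≤ Syz f₁ f₂ f₃ := by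
  rw [Kos, Submodule.span_le]
  rintro v (rfl | rfl | rfl) <;>
    simp only [SetLike.mem_coe, mem_syz_iff, Matrix.cons_val_zero, Matrix.cons_val_one,
      Matrix.cons_val] <;>
    ring

theorem isKoszulExact_of_kos_eq_syz (h : Kos f₁ f₂ f₃ = Syz f₁ f₂ f₃) :
    IsKoszulExact f₁ f₂ f₃ := by
  intro A B C hABC
  have hmem : ![A, B, C] ∈ Kos f₁ f₂ f₃ := h ▸ mem_syz_iff.mpr (by simpa using hABC)
  obtain ⟨a, b, c, habc⟩ := Submodule.mem_span_triple.mp hmem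
  have h₀ := congrFun habc 0
  have h₁ := congrFun habc 1
  have h₂ := congrFun habc 2
  simp only [Pi.add_apply, Pi.smul_apply, smul_eq_mul, Matrix.cons_val_zero, Matrix.cons_val_one,
    Matrix.cons_val] at h₀ h₁ h₂
  exact ⟨a, b, c, by linear_combination -h₀, by linear_combination -h₁, by linear_combination -h₂⟩

end Polynomial

theorem koszul_proper_in_syzygy
    (k : Type) [Field k]
    (f₁ f₂ f₃ : MvPolynomial (Fin 4) k)
    (I : Ideal (MvPolynomial (Fin 4) k)) (hI : I = Ideal.span {f₁, f₂, f₃})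
    (hht : idealHeight I = 2) :
    Kos f₁ f₂ f₃ ≤ Syz f₁ f₂ f₃ ∧ Kos f₁ f₂ f₃ ≠ Syz f₁ f₂ f₃ := by
  refine ⟨kos_le_syz, fun hK ↦ ?_⟩
  have h3 : 3 ≤ idealHeight I := le_iInf₂ fun P hP ↦
    P.height_eq_orderHeight ▸ (isKoszulExact_of_kos_eq_syz hK).three_le_height (hI ▸ hP)
  rw [hht] at h3
  exact absurd h3 (by decide)

end
end

section
/- Let k be a field and R = k[s,u,t,v] with the bigrading deg s = deg u = (1,0), deg t = deg v = (0,1), and let b = ⟨st, sv, ut, uv⟩ be the irrelevant ideal. Let M be a finitely generated R-module equipped with an ℕ×ℕ-grading M = ⊕_{(k,l)} M_{k,l} compatible with the bigrading of R (R_{a,b}·M_{k,l} ⊆ M_{k+a,l+b}). Then there exists n ≥ 0 with b^n · M = 0 if and only if there exists N such that M_{k,l} = 0 whenever k ≥ N and l ≥ N. -/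
/-!
STATEMENT 7: k field, R = k[s,u,t,v] bigraded (deg s = deg u = (1,0),
deg t = deg v = (0,1)), b = ⟨st,sv,ut,uv⟩ the irrelevant ideal.  M a finitely
generated R-module with an ℕ×ℕ-grading M = ⊕ M_{k,l} compatible with the
bigrading of R.  Then (∃ n, b^n·M = 0) ↔ (∃ N, M_{k,l} = 0 for all k,l ≥ N).

Variables: X 0 = s, X 1 = u, X 2 = t, X 3 = v.
-/

open MvPolynomial
open Pointwise
set_option synthInstance.maxHeartbeats 1000000
set_option maxHeartbeats 1000000
set_option linter.unreachableTactic false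
set_option linter.unusedTactic false

noncomputable section

/-- ℕ×ℕ-valued bidegree weights: s,u ↦ (1,0); t,v ↦ (0,1). -/
def bwN : Fin 4 → ℕ × ℕ := ![(1,0), (1,0), (0,1), (0,1)]

/-- The irrelevant ideal ⟨st, sv, ut, uv⟩. -/
def irrel (k : Type) [Field k] : Ideal (MvPolynomial (Fin 4) k) :=
  Ideal.span {X 0 * X 2, X 0 * X 3, X 1 * X 2, X 1 * X 3}

lemma weight_bwN (m : Fin 4 →₀ ℕ) :
    (Finsupp.weight bwN) m = (m 0 + m 1, m 2 + m 3) := by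
  rw [Finsupp.weight_apply, Finsupp.sum_fintype, Fin.sum_univ_four]
  · simp [bwN, Prod.ext_iff]
  · intro i; exact zero_smul ℕ _

lemma monomial_mem_irrel_pow (k : Type) [Field k] (n : ℕ) (m : Fin 4 →₀ ℕ) (c : k)
    (h1 : n ≤ m 0 + m 1) (h2 : n ≤ m 2 + m 3) :
    (monomial m c : MvPolynomial (Fin 4) k) ∈ (irrel k) ^ n := by
  induction n generalizing m with
  | zero => simp
  | succ n ih =>
    have hi' : 1 ≤ m 0 ∨ 1 ≤ m 1 := by omega
    have hj' : 1 ≤ m 2 ∨ 1 ≤ m 3 := by omega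
    obtain ⟨i, hi0, hmi⟩ : ∃ i : Fin 4, (i = 0 ∨ i = 1) ∧ 1 ≤ m i := by
      rcases hi' with h | h
      · exact ⟨0, Or.inl rfl, h⟩
      · exact ⟨1, Or.inr rfl, h⟩
    obtain ⟨j, hj0, hmj⟩ : ∃ j : Fin 4, (j = 2 ∨ j = 3) ∧ 1 ≤ m j := by
      rcases hj' with h | h
      · exact ⟨2, Or.inl rfl, h⟩
      · exact ⟨3, Or.inr rfl, h⟩
    set m' : Fin 4 →₀ ℕ := m - Finsupp.single i 1 - Finsupp.single j 1 with hm'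
    have hij : i ≠ j := by rcases hi0 with rfl | rfl <;> rcases hj0 with rfl | rfl <;> decide
    have hms : Finsupp.single i 1 + Finsupp.single j 1 + m' = m := by
      ext a
      have h1 : (Finsupp.single i 1 : Fin 4 →₀ ℕ) a = if a = i then 1 else 0 := by
        simp [Finsupp.single_apply, eq_comm]
      have h2 : (Finsupp.single j 1 : Fin 4 →₀ ℕ) a = if a = j then 1 else 0 := by
        simp [Finsupp.single_apply, eq_comm]
      simp only [hm', Finsupp.add_apply, Finsupp.tsub_apply, h1, h2]
      rcases eq_or_ne a i with rfl | hai <;> rcases eq_or_ne a j with rfl | haj <;>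
        simp_all <;> omega
    have key : (monomial m c : MvPolynomial (Fin 4) k) = (X i * X j) * monomial m' c := by
      have hx : (X i * X j : MvPolynomial (Fin 4) k)
          = monomial (Finsupp.single i 1 + Finsupp.single j 1) 1 := by
        rw [X, X, monomial_mul, one_mul]
      rw [hx, monomial_mul, one_mul, hms]
    have hgen : (X i * X j : MvPolynomial (Fin 4) k) ∈ irrel k := by
      apply Ideal.subset_span
      rcases hi0 with rfl | rfl <;> rcases hj0 with rfl | rfl <;> simp
    have hco : ∀ a : Fin 4, m' a = m a - (if a = i then 1 else 0) - (if a = j then 1 else 0) := by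
      intro a
      simp [hm', Finsupp.single_apply, eq_comm]
    have him : monomial m' c ∈ (irrel k) ^ n := by
      apply ih
      · have := hco 0; have := hco 1
        rcases hi0 with rfl | rfl <;> rcases hj0 with rfl | rfl <;> simp_all <;> omega
      · have := hco 2; have := hco 3
        rcases hi0 with rfl | rfl <;> rcases hj0 with rfl | rfl <;> simp_all <;> omega
    rw [key, pow_succ']
    exact Ideal.mul_mem_mul hgen him

lemma homog_mem_irrel_pow (k : Type) [Field k] (n : ℕ) (a b : ℕ)
    (r : MvPolynomial (Fin 4) k) (hr : r.IsWeightedHomogeneous bwN (a, b))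
    (ha : n ≤ a) (hb : n ≤ b) : r ∈ (irrel k) ^ n := by
  rw [← support_sum_monomial_coeff r]
  refine Ideal.sum_mem _ fun m hm => ?_
  have hd := hr (mem_support_iff.mp hm)
  rw [weight_bwN] at hd
  rw [Prod.mk.injEq] at hd
  exact monomial_mem_irrel_pow k n m _ (by omega) (by omega)

lemma setpow_homog (k : Type) [Field k] (N : ℕ) :
    ∀ z ∈ (({X 0 * X 2, X 0 * X 3, X 1 * X 2, X 1 * X 3} :
      Set (MvPolynomial (Fin 4) k)) ^ N), z.IsWeightedHomogeneous bwN (N, N) := by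
  induction N with
  | zero =>
    intro z hz
    rw [pow_zero, Set.mem_one] at hz
    subst hz
    exact isWeightedHomogeneous_one k bwN
  | succ N ih =>
    intro z hz
    rw [pow_succ] at hz
    obtain ⟨a, ha, b, hb, rfl⟩ := Set.mem_mul.mp hz
    have hb' : b.IsWeightedHomogeneous bwN (1, 1) := by
      have h02 : (X 0 * X 2 : MvPolynomial (Fin 4) k).IsWeightedHomogeneous bwN (1, 1) :=
        (isWeightedHomogeneous_X k bwN 0).mul (isWeightedHomogeneous_X k bwN 2)
      have h03 : (X 0 * X 3 : MvPolynomial (Fin 4) k).IsWeightedHomogeneous bwN (1, 1) :=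
        (isWeightedHomogeneous_X k bwN 0).mul (isWeightedHomogeneous_X k bwN 3)
      have h12 : (X 1 * X 2 : MvPolynomial (Fin 4) k).IsWeightedHomogeneous bwN (1, 1) :=
        (isWeightedHomogeneous_X k bwN 1).mul (isWeightedHomogeneous_X k bwN 2)
      have h13 : (X 1 * X 3 : MvPolynomial (Fin 4) k).IsWeightedHomogeneous bwN (1, 1) :=
        (isWeightedHomogeneous_X k bwN 1).mul (isWeightedHomogeneous_X k bwN 3)
      rcases hb with rfl | rfl | rfl | rfl
      exacts [h02, h03, h12, h13]
    have hmul := (ih a ha).mul hb'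
    convert hmul using 2 <;> simp

theorem irrelevant_power_kills_iff_vanishing_high_bidegrees
    (k : Type) [Field k]
    (M : Type) [AddCommGroup M] [Module (MvPolynomial (Fin 4) k) M]
    [Module k M] [IsScalarTower k (MvPolynomial (Fin 4) k) M]
    [Module.Finite (MvPolynomial (Fin 4) k) M]
    -- the bigrading of M, as a direct sum decomposition into k-subspaces:
    (ℳ : ℕ × ℕ → Submodule k M) [DirectSum.Decomposition ℳ]
    -- compatibility with the bigrading of R: R_{a,b} · M_{k,l} ⊆ M_{k+a,l+b}:
    (hcompat : ∀ (a b : ℕ × ℕ) (r : MvPolynomial (Fin 4) k) (x : M),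
      r.IsWeightedHomogeneous bwN a → x ∈ ℳ b → r • x ∈ ℳ (b + a)) :
    (∃ n : ℕ, (irrel k) ^ n • (⊤ : Submodule (MvPolynomial (Fin 4) k) M) = ⊥) ↔
    (∃ N : ℕ, ∀ p q : ℕ, N ≤ p → N ≤ q → ℳ (p, q) = ⊥) := by
  classical
  constructor
  · rintro ⟨n, hn⟩
    obtain ⟨s, hs⟩ := Module.Finite.fg_top (R := MvPolynomial (Fin 4) k) (M := M)
    set B : ℕ := s.sup fun m =>
      (DirectSum.decompose ℳ m).support.sup fun d => max d.1 d.2 with hB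
    refine ⟨B + n, fun p q hp hq => ?_⟩
    -- the projection onto the (p,q) component, as an additive monoid hom
    set π : M →+ M :=
      ((ℳ (p, q)).subtype.toAddMonoidHom).comp
        ((DFinsupp.evalAddMonoidHom (p, q)).comp
          (DirectSum.decomposeAddEquiv ℳ).toAddMonoidHom) with hπdef
    have hπ : ∀ x : M, π x = (DirectSum.decompose ℳ x (p, q) : M) := fun x => rfl
    -- key: for homogeneous y of low degree, π (r • y) = 0 for all r
    have key : ∀ (c d : ℕ), c ≤ B → d ≤ B → ∀ y ∈ ℳ (c, d),
        ∀ r : MvPolynomial (Fin 4) k, π (r • y) = 0 := by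
      intro c d hc hd y hy r
      have hfin := weightedHomogeneousComponent_finsupp (w := bwN) r
      have hr : ∑ d' ∈ hfin.toFinset, weightedHomogeneousComponent bwN d' r = r := by
        rw [← finsum_eq_sum _ hfin]
        exact sum_weightedHomogeneousComponent bwN r
      rw [← hr, Finset.sum_smul, map_sum]
      refine Finset.sum_eq_zero fun d' _ => ?_
      have hterm : weightedHomogeneousComponent bwN d' r • y ∈ ℳ ((c, d) + d') :=
        hcompat d' (c, d) _ y (weightedHomogeneousComponent_isWeightedHomogeneous d' r) hy
      by_cases he : (c, d) + d' = (p, q)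
      · have hsplit : c + d'.1 = p ∧ d + d'.2 = q := by
          rw [Prod.ext_iff] at he
          exact ⟨he.1, he.2⟩
        have hhom : weightedHomogeneousComponent bwN d' r ∈ (irrel k) ^ n := by
          have : d' = (d'.1, d'.2) := rfl
          exact homog_mem_irrel_pow k n d'.1 d'.2 _
            (this ▸ weightedHomogeneousComponent_isWeightedHomogeneous d' r)
            (by omega) (by omega)
        have hz : weightedHomogeneousComponent bwN d' r • y = 0 := by
          have hmem : weightedHomogeneousComponent bwN d' r • y ∈
              (irrel k) ^ n • (⊤ : Submodule (MvPolynomial (Fin 4) k) M) :=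
            Submodule.smul_mem_smul hhom Submodule.mem_top
          rw [hn] at hmem
          exact (Submodule.mem_bot _).mp hmem
        rw [hz, map_zero]
      · rw [hπ, DirectSum.decompose_of_mem_ne ℳ hterm he]
    have main : ∀ x : M, π x = 0 := by
      intro x
      have hx : x ∈ Submodule.span (MvPolynomial (Fin 4) k) (s : Set M) := by
        rw [hs]; exact Submodule.mem_top
      have hind : ∀ r : MvPolynomial (Fin 4) k, π (r • x) = 0 := by
        induction hx using Submodule.span_induction with
        | mem m hm =>
          intro r
          conv_lhs => rw [← DirectSum.sum_support_decompose ℳ m]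
          rw [Finset.smul_sum, map_sum]
          refine Finset.sum_eq_zero fun d hd => ?_
          have hdB : max d.1 d.2 ≤ B := by
            rw [hB]
            exact le_trans (Finset.le_sup (f := fun d : ℕ × ℕ => max d.1 d.2) hd)
              (Finset.le_sup
                (f := fun m => (DirectSum.decompose ℳ m).support.sup fun d => max d.1 d.2) hm)
          have : (d.1, d.2) = d := rfl
          exact key d.1 d.2 (le_trans (le_max_left _ _) hdB)
            (le_trans (le_max_right _ _) hdB)
            _ (this ▸ (DirectSum.decompose ℳ m d).2) r
        | zero => intro r; rw [smul_zero, map_zero]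
        | add x y _ _ hx hy => intro r; rw [smul_add, map_add, hx, hy, add_zero]
        | smul a x _ hx => intro r; rw [smul_smul]; exact hx (r * a)
      have := hind 1
      rwa [one_smul] at this
    rw [eq_bot_iff]
    intro x hx
    have h0 := main x
    rw [hπ, DirectSum.decompose_of_mem_same ℳ hx] at h0
    exact (Submodule.mem_bot _).mpr h0
  · rintro ⟨N, hN⟩
    refine ⟨N, ?_⟩
    have hkill : ∀ r : MvPolynomial (Fin 4) k,
        r.IsWeightedHomogeneous bwN (N, N) → ∀ x : M, r • x = 0 := by
      intro r hr x
      conv_lhs => rw [← DirectSum.sum_support_decompose ℳ x]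
      rw [Finset.smul_sum]
      refine Finset.sum_eq_zero fun d _ => ?_
      have : (d.1, d.2) = d := rfl
      have hmem : r • (DirectSum.decompose ℳ x d : M) ∈ ℳ (d + (N, N)) :=
        hcompat (N, N) d r _ hr (this ▸ (DirectSum.decompose ℳ x d).2)
      have hzero : ℳ (d + (N, N)) = ⊥ := by
        have : d + (N, N) = (d.1 + N, d.2 + N) := rfl
        rw [this]
        exact hN _ _ (by omega) (by omega)
      rw [hzero] at hmem
      exact (Submodule.mem_bot _).mp hmem
    have hSN := setpow_homog k N
    rw [eq_bot_iff]
    refine Submodule.smul_le.mpr fun r hr x _ => ?_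
    have hrz : r • x = 0 := by
      have hr' : r ∈ Submodule.span (MvPolynomial (Fin 4) k)
          ((({X 0 * X 2, X 0 * X 3, X 1 * X 2, X 1 * X 3} :
          Set (MvPolynomial (Fin 4) k))) ^ N) := by
        rw [← Submodule.span_pow]
        exact hr
      clear hr
      have hall : ∀ y : M, r • y = 0 := by
        induction hr' using Submodule.span_induction with
        | mem z hz => exact hkill z (hSN z hz)
        | zero => intro y; rw [zero_smul]
        | add a b _ _ ha hb => intro y; rw [add_smul, ha, hb, add_zero]
        | smul a z _ hz => intro y; rw [smul_eq_mul, mul_smul, hz, smul_zero]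
      exact hall x
    rw [hrz]
    exact Submodule.zero_mem ⊥
end
end
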